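/- Outer Skolemization preserves validity: Let A be a first-order formula and let F be its outer Skolemized form, a quantified formula over the language of A extended by the fresh Skolem function symbols. Then A is valid if and only if F is valid (where validity of F is taken over all structures interpreting the extended language). -/

import Mathlib

namespace Herbrand

abbrev FSym := Option (ℕ ⊕ ℕ)

inductive Tm : Type where
  | var : ℕ → Tm
  | fn : FSym → List Tm → Tm

inductive Fm : Type where
  | atom : ℕ → List Tm → Fm
  | neg : Fm → Fm
  | or : Fm → Fm → Fm
  | and : Fm → Fm → Fm
  | all : ℕ → Fm → Fm
  | ex : ℕ → Fm → Fm

mutual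
  def Tm.beq : Tm → Tm → Bool
    | .var x, .var y => x == y
    | .fn f ts, .fn g us => f == g && Tm.beqList ts us
    | _, _ => false
  def Tm.beqList : List Tm → List Tm → Bool
    | [], [] => true
    | t :: ts, u :: us => Tm.beq t u && Tm.beqList ts us
    | _, _ => false
end

def Tm.height : Tm → ℕ
  | .var _ => 1
  | .fn _ ts => 1 + ts.attach.foldr (fun ⟨t, _⟩ m => max (Tm.height t) m) 0

def Tm.varsT : Tm → List ℕ
  | .var x => [x]
  | .fn _ ts => ts.attach.foldr (fun ⟨t, _⟩ l => Tm.varsT t ++ l) []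

def Tm.symsT : Tm → List (FSym × ℕ)
  | .var _ => []
  | .fn f ts => (f, ts.length) :: ts.attach.foldr (fun ⟨t, _⟩ l => Tm.symsT t ++ l) []

def Tm.substT (x : ℕ) (u : Tm) : Tm → Tm
  | .var y => if y = x then u else .var y
  | .fn f ts => .fn f (ts.attach.map fun ⟨t, _⟩ => Tm.substT x u t)

/-- A term is over the base language: no Skolem symbols, no bullet. -/
def Tm.isBaseT (t : Tm) : Prop := ∀ p ∈ t.symsT, ∃ k : ℕ, p.1 = some (Sum.inl k)

def Fm.freeVars : Fm → List ℕ
  | .atom _ ts => ts.flatMap Tm.varsT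
  | .neg A => A.freeVars
  | .or A B => A.freeVars ++ B.freeVars
  | .and A B => A.freeVars ++ B.freeVars
  | .all x A => A.freeVars.filter (· ≠ x)
  | .ex x A => A.freeVars.filter (· ≠ x)

def Fm.boundVars : Fm → List ℕ
  | .atom _ _ => []
  | .neg A => A.boundVars
  | .or A B => A.boundVars ++ B.boundVars
  | .and A B => A.boundVars ++ B.boundVars
  | .all x A => x :: A.boundVars
  | .ex x A => x :: A.boundVars

def Fm.symsF : Fm → List (FSym × ℕ)
  | .atom _ ts => ts.flatMap Tm.symsT
  | .neg A => A.symsF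
  | .or A B => A.symsF ++ B.symsF
  | .and A B => A.symsF ++ B.symsF
  | .all _ A => A.symsF
  | .ex _ A => A.symsF

/-- Naive substitution of the term `u` for the free occurrences of the variable `x`. -/
def Fm.subst (x : ℕ) (u : Tm) : Fm → Fm
  | .atom p ts => .atom p (ts.map (Tm.substT x u))
  | .neg A => .neg (Fm.subst x u A)
  | .or A B => .or (Fm.subst x u A) (Fm.subst x u B)
  | .and A B => .and (Fm.subst x u A) (Fm.subst x u B)
  | .all y A => if y = x then .all y A else .all y (Fm.subst x u A)
  | .ex y A => if y = x then .ex y A else .ex y (Fm.subst x u A)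

/-- Quantifier-freeness. -/
def Fm.qf : Fm → Prop
  | .atom _ _ => True
  | .neg A => A.qf
  | .or A B => A.qf ∧ B.qf
  | .and A B => A.qf ∧ B.qf
  | .all _ _ => False
  | .ex _ _ => False

def Fm.qfB : Fm → Bool
  | .atom _ _ => true
  | .neg A => A.qfB
  | .or A B => A.qfB && B.qfB
  | .and A B => A.qfB && B.qfB
  | .all _ _ => false
  | .ex _ _ => false

/-- A formula is over the base language. -/
def Fm.isBase (A : Fm) : Prop := ∀ p ∈ A.symsF, ∃ k : ℕ, p.1 = some (Sum.inl k)

/-- Rectified: distinct binders, and bound variables distinct from free variables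
(the tacit assumption of the paper: every occurrence of every variable is either
free or bound by a unique quantifier). -/
def Fm.rectified (A : Fm) : Prop :=
  A.boundVars.Nodup ∧ ∀ x ∈ A.boundVars, x ∉ A.freeVars

/-- Sentential (Boolean) evaluation, reading each atomic formula (a predicate symbol
together with its argument terms) as a propositional variable. -/
def Fm.sentEval (β : ℕ → List Tm → Bool) : Fm → Bool
  | .atom p ts => β p ts
  | .neg A => !(A.sentEval β)
  | .or A B => A.sentEval β || B.sentEval β
  | .and A B => A.sentEval β && B.sentEval β
  | .all _ _ => false
  | .ex _ _ => false

/-- A sentential tautology: a quantifier-free formula that evaluates to true under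
every Boolean valuation of its atoms. -/
def Fm.taut (A : Fm) : Prop := A.qf ∧ ∀ β : ℕ → List Tm → Bool, A.sentEval β = true

/-- An interpretation of the language on a domain `D`. -/
structure Interp (D : Type) where
  fns : FSym → List D → D
  prd : ℕ → List D → Prop

def Tm.eval {D : Type} (I : Interp D) (v : ℕ → D) : Tm → D
  | .var x => v x
  | .fn f ts => I.fns f (ts.attach.map fun ⟨t, _⟩ => Tm.eval I v t)

def Fm.holds {D : Type} (I : Interp D) (v : ℕ → D) : Fm → Prop
  | .atom p ts => I.prd p (ts.map (Tm.eval I v))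
  | .neg A => ¬ Fm.holds I v A
  | .or A B => Fm.holds I v A ∨ Fm.holds I v B
  | .and A B => Fm.holds I v A ∧ Fm.holds I v B
  | .all x A => ∀ d : D, Fm.holds I (Function.update v x d) A
  | .ex x A => ∃ d : D, Fm.holds I (Function.update v x d) A

/-- Validity: truth in every structure (nonempty domain) under every assignment. -/
def Fm.valid (A : Fm) : Prop :=
  ∀ (D : Type) (_ : Nonempty D) (I : Interp D) (v : ℕ → D), A.holds I v


/-- Alpha-equivalence: equality of formulas up to renaming of bound variables. -/
inductive Alpha : Fm → Fm → Prop where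
  | refl (A : Fm) : Alpha A A
  | symm {A B : Fm} : Alpha A B → Alpha B A
  | trans {A B C : Fm} : Alpha A B → Alpha B C → Alpha A C
  | negc {A B : Fm} : Alpha A B → Alpha (.neg A) (.neg B)
  | orc {A A' B B' : Fm} : Alpha A A' → Alpha B B' → Alpha (.or A B) (.or A' B')
  | andc {A A' B B' : Fm} : Alpha A A' → Alpha B B' → Alpha (.and A B) (.and A' B')
  | allc {A B : Fm} (x : ℕ) : Alpha A B → Alpha (.all x A) (.all x B)
  | exc {A B : Fm} (x : ℕ) : Alpha A B → Alpha (.ex x A) (.ex x B)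
  | allRename (x y : ℕ) (A : Fm) : y ∉ A.freeVars → y ∉ A.boundVars →
      Alpha (.all x A) (.all y (Fm.subst x (.var y) A))
  | exRename (x y : ℕ) (A : Fm) : y ∉ A.freeVars → y ∉ A.boundVars →
      Alpha (.ex x A) (.ex y (Fm.subst x (.var y) A))

/-- One-hole contexts `A[…]` in formulas. -/
inductive Ctx : Type where
  | hole : Ctx
  | negC : Ctx → Ctx
  | orL : Ctx → Fm → Ctx
  | orR : Fm → Ctx → Ctx
  | andL : Ctx → Fm → Ctx
  | andR : Fm → Ctx → Ctx
  | allC : ℕ → Ctx → Ctx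
  | exC : ℕ → Ctx → Ctx

def Ctx.fill : Ctx → Fm → Fm
  | .hole, H => H
  | .negC c, H => .neg (c.fill H)
  | .orL c B, H => .or (c.fill H) B
  | .orR B c, H => .or B (c.fill H)
  | .andL c B, H => .and (c.fill H) B
  | .andR B c, H => .and B (c.fill H)
  | .allC x c, H => .all x (c.fill H)
  | .exC x c, H => .ex x (c.fill H)

/-- `true` iff the hole is in the scope of an even number of negation symbols. -/
def Ctx.pol : Ctx → Bool
  | .hole => true
  | .negC c => !c.pol
  | .orL c _ => c.pol
  | .orR _ c => c.pol
  | .andL c _ => c.pol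
  | .andR _ c => c.pol
  | .allC _ c => c.pol
  | .exC _ c => c.pol

/-- The hole is accessible: not in the scope of any quantifier. -/
def Ctx.accessible : Ctx → Prop
  | .hole => True
  | .negC c => c.accessible
  | .orL c _ => c.accessible
  | .orR _ c => c.accessible
  | .andL c _ => c.accessible
  | .andR _ c => c.accessible
  | .allC _ _ => False
  | .exC _ _ => False

/-- Variables occurring free in the context (the hole contributing nothing). -/
def Ctx.freeVarsC : Ctx → List ℕ
  | .hole => []
  | .negC c => c.freeVarsC
  | .orL c B => c.freeVarsC ++ B.freeVars
  | .orR B c => B.freeVars ++ c.freeVarsC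
  | .andL c B => c.freeVarsC ++ B.freeVars
  | .andR B c => B.freeVars ++ c.freeVarsC
  | .allC x c => c.freeVarsC.filter (· ≠ x)
  | .exC x c => c.freeVarsC.filter (· ≠ x)

/-- `mkQ q x H` is `∃x.H` if `q = true`, and `∀x.H` if `q = false`.
A quantifier `mkQ q x` sitting in a context `c` is existentialoid iff `q = c.pol`
(i.e. `∃` under an even number of negations or `∀` under an odd number),
and universaloid iff `q = !c.pol`. -/
def mkQ (q : Bool) (x : ℕ) (H : Fm) : Fm := if q then .ex x H else .all x H

/-- Derivations in the modern version of Herbrand's modus-ponens-free calculus,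
from a start formula, recording the list of instance terms `t` used by the
applications of the generalized rule of γ-quantification. -/
inductive Deriv : Fm → Fm → List Tm → Prop where
  | refl (A : Fm) : Deriv A A []
  | gamma {B : Fm} {ts : List Tm} (c : Ctx) (q : Bool) (x : ℕ) (t : Tm) (H : Fm) :
      Deriv B (c.fill (Fm.subst x t H)) ts →
      c.accessible → q = c.pol → (∀ z ∈ t.varsT, z ∉ H.boundVars) →
      Deriv B (c.fill (mkQ q x H)) (ts ++ [t])
  | delta {B : Fm} {ts : List Tm} (c : Ctx) (q : Bool) (y : ℕ) (H : Fm) :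
      Deriv B (c.fill H) ts →
      c.accessible → q = !c.pol → y ∉ c.freeVarsC →
      Deriv B (c.fill (mkQ q y H)) ts
  | simp {B : Fm} {ts : List Tm} (c : Ctx) (H H' : Fm) :
      Deriv B (c.fill (if c.pol then Fm.or H H' else Fm.and H H')) ts →
      Alpha H H' →
      Deriv B (c.fill H) ts
  | alpha {B A A' : Fm} {ts : List Tm} : Deriv B A ts → Alpha A A' → Deriv B A' ts

/-- A single application of a generalized rule of γ- or δ-quantification. -/
inductive QStep : Fm → Fm → Prop where
  | gamma (c : Ctx) (q : Bool) (x : ℕ) (t : Tm) (H : Fm) :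
      c.accessible → q = c.pol → (∀ z ∈ t.varsT, z ∉ H.boundVars) →
      QStep (c.fill (Fm.subst x t H)) (c.fill (mkQ q x H))
  | delta (c : Ctx) (q : Bool) (y : ℕ) (H : Fm) :
      c.accessible → q = !c.pol → y ∉ c.freeVarsC →
      QStep (c.fill H) (c.fill (mkQ q y H))

/-- A single application of the generalized rule of γ-simplification:
simplification where `H` is of the form `Qy.C` with `Qy.` existentialoid. -/
inductive GSimpStep : Fm → Fm → Prop where
  | mk (c : Ctx) (y : ℕ) (C H' : Fm) :
      Alpha (mkQ c.pol y C) H' →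
      GSimpStep
        (c.fill (if c.pol then Fm.or (mkQ c.pol y C) H' else Fm.and (mkQ c.pol y C) H'))
        (c.fill (mkQ c.pol y C))


/-- The Skolem term `x*(y₁,…,yₘ)` for the removed universaloid variable `x`,
whose arguments are the variables of the existentialoid quantifiers in scope. -/
def skTm (x : ℕ) (γs : List ℕ) : Tm := .fn (some (Sum.inr x)) (γs.map Tm.var)

/-- Outer Skolemization: `b` is the polarity (`true` = an even number of negations
so far), `γs` the list of variables of the existentialoid quantifiers in whose
scope we are, in order. Universaloid quantifiers are removed and their variables
replaced by Skolem terms; existentialoid quantifiers are kept. -/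
def Fm.skolemize (b : Bool) (γs : List ℕ) : Fm → Fm
  | .atom p ts => .atom p ts
  | .neg A => .neg (A.skolemize (!b) γs)
  | .or A B => .or (A.skolemize b γs) (B.skolemize b γs)
  | .and A B => .and (A.skolemize b γs) (B.skolemize b γs)
  | .all x A => if b then Fm.subst x (skTm x γs) (A.skolemize b γs)
                else .all x (A.skolemize b (γs ++ [x]))
  | .ex x A => if b then .ex x (A.skolemize b (γs ++ [x]))
               else Fm.subst x (skTm x γs) (A.skolemize b γs)

/-- The outer Skolemized form of a formula. -/
def Fm.outerSk (A : Fm) : Fm := A.skolemize true []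

def falsum : Fm := .and (.atom 0 []) (.neg (.atom 0 []))
def verum : Fm := .or (.atom 0 []) (.neg (.atom 0 []))

def bigOr : List Fm → Fm
  | [] => falsum
  | [A] => A
  | A :: B :: rest => .or A (bigOr (B :: rest))

def bigAnd : List Fm → Fm
  | [] => verum
  | [A] => A
  | A :: B :: rest => .and A (bigAnd (B :: rest))

/-- All lists of length `k` over the given list. -/
def tuples : ℕ → List Tm → List (List Tm)
  | 0, _ => [[]]
  | k + 1, l => l.flatMap fun a => (tuples k l).map (a :: ·)

/-- The fresh constant `•` is included iff `F` contains neither constants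
nor free variables. -/
def Fm.allowBullet (F : Fm) : Bool :=
  F.freeVars.isEmpty && F.symsF.all (fun p => p.2 != 0)

/-- The champ fini `T_n(F)`: all terms of height `< n` built from the function
symbols (with their arities), constant symbols, and free variables of `F`
(with the fresh constant `•` added if `F` has neither constants nor free
variables).  `T_1(F) = ∅`. -/
def Fm.champTm (F : Fm) : ℕ → List Tm
  | 0 => []
  | 1 => []
  | n + 2 =>
      F.freeVars.map Tm.var
        ++ (if F.allowBullet then [Tm.fn none []] else [])
        ++ F.symsF.flatMap (fun p => (tuples p.2 (F.champTm (n + 1))).map (Tm.fn p.1))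

/-- The expansion `A^T` of `A` w.r.t. a finite set (list) of terms `T`. -/
def Fm.expandL (T : List Tm) : Fm → Fm
  | .atom p ts => .atom p ts
  | .neg A => .neg (A.expandL T)
  | .or A B => .or (A.expandL T) (B.expandL T)
  | .and A B => .and (A.expandL T) (B.expandL T)
  | .ex x A => bigOr (T.map fun t => Fm.subst x t (A.expandL T))
  | .all x A => bigAnd (T.map fun t => Fm.subst x t (A.expandL T))

/-- Property C of order `n` (for `n ≥ 1`): letting `F` be the outer Skolemized
form of `A`, for `n = 1` the formula `F` itself must be a sentential tautology,
and for `n > 1` the expansion `F^{T_n(F)}` must be a sentential tautology. -/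
def Fm.hasC (A : Fm) (n : ℕ) : Prop :=
  (if n = 1 then A.outerSk else Fm.expandL (A.outerSk.champTm n) A.outerSk).taut


/-- Reading every term that starts with a Skolem function symbol as an atomic
variable, via an injective coding `code` of terms into variable names. -/
def Tm.readSk (code : Tm → ℕ) : Tm → Tm
  | .var x => .var x
  | .fn (some (Sum.inr k)) ts => .var (code (.fn (some (Sum.inr k)) ts))
  | .fn (some (Sum.inl k)) ts => .fn (some (Sum.inl k)) (ts.attach.map fun ⟨t, _⟩ => Tm.readSk code t)
  | .fn none ts => .fn none (ts.attach.map fun ⟨t, _⟩ => Tm.readSk code t)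

def Fm.readSk (code : Tm → ℕ) : Fm → Fm
  | .atom p ts => .atom p (ts.map (Tm.readSk code))
  | .neg A => .neg (A.readSk code)
  | .or A B => .or (A.readSk code) (B.readSk code)
  | .and A B => .and (A.readSk code) (B.readSk code)
  | .all x A => .all x (A.readSk code)
  | .ex x A => .ex x (A.readSk code)

/-- The atoms (predicate symbol with argument terms) occurring in a formula. -/
def Fm.atoms : Fm → List (ℕ × List Tm)
  | .atom p ts => [(p, ts)]
  | .neg A => A.atoms
  | .or A B => A.atoms ++ B.atoms
  | .and A B => A.atoms ++ B.atoms
  | .all _ A => A.atoms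
  | .ex _ A => A.atoms

/-- All Boolean valuations of a finite list of atoms (all other atoms `false`). -/
def valuations : List (ℕ × List Tm) → List (ℕ → List Tm → Bool)
  | [] => [fun _ _ => false]
  | a :: rest =>
      (valuations rest).flatMap fun β =>
        [fun p ts => if p == a.1 && Tm.beqList ts a.2 then true else β p ts,
         fun p ts => if p == a.1 && Tm.beqList ts a.2 then false else β p ts]

/-- Computable check for sentential tautology. -/
def Fm.tautB (A : Fm) : Bool :=
  A.qfB && (valuations A.atoms).all fun β => A.sentEval β

/-- Computable check for Property C of order `n`. -/
def Fm.hasCB (A : Fm) (n : ℕ) : Bool :=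
  (if n = 1 then A.outerSk else Fm.expandL (A.outerSk.champTm n) A.outerSk).tautB

/-- The six rules of passage, read from left to right. -/
inductive PassEq : Fm → Fm → Prop where
  | p1 (x : ℕ) (A : Fm) : PassEq (.neg (.all x A)) (.ex x (.neg A))
  | p2 (x : ℕ) (A : Fm) : PassEq (.neg (.ex x A)) (.all x (.neg A))
  | p3 (x : ℕ) (A B : Fm) : x ∉ B.freeVars → PassEq (.or (.all x A) B) (.all x (.or A B))
  | p4 (x : ℕ) (A B : Fm) : x ∉ B.freeVars → PassEq (.or B (.all x A)) (.all x (.or B A))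
  | p5 (x : ℕ) (A B : Fm) : x ∉ B.freeVars → PassEq (.or (.ex x A) B) (.ex x (.or A B))
  | p6 (x : ℕ) (A B : Fm) : x ∉ B.freeVars → PassEq (.or B (.ex x A)) (.ex x (.or B A))

/-- A single inference step of Herbrand's historic modus-ponens-free calculus:
the shallow rules of γ- and δ-quantification (empty context), the generalized
(deep) rule of simplification, the twelve (deep) rules of passage, and renaming
of bound variables. -/
inductive HStep : Fm → Fm → Prop where
  | gammaSh (x : ℕ) (t : Tm) (H : Fm) :
      (∀ z ∈ t.varsT, z ∉ H.boundVars) →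
      HStep (Fm.subst x t H) (.ex x H)
  | deltaSh (y : ℕ) (H : Fm) :
      HStep H (.all y H)
  | simp (c : Ctx) (H H' : Fm) :
      Alpha H H' →
      HStep (c.fill (if c.pol then Fm.or H H' else Fm.and H H')) (c.fill H)
  | passage (c : Ctx) (L R : Fm) : PassEq L R → HStep (c.fill L) (c.fill R)
  | passageRev (c : Ctx) (L R : Fm) : PassEq L R → HStep (c.fill R) (c.fill L)
  | alpha (A B : Fm) : Alpha A B → HStep A B


theorem Tm.ind' (P : Tm → Prop) (hv : ∀ x, P (.var x))
    (hf : ∀ f ts, (∀ t ∈ ts, P t) → P (.fn f ts)) : ∀ t, P t := by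
  intro t
  induction t using Tm.rec (motive_2 := fun ts => ∀ t ∈ ts, P t) with
  | var x => exact hv x
  | fn f ts ih => exact hf f ts ih
  | nil => rename_i u hu; simp at hu
  | cons t ts iht ihts =>
      rename_i u hu
      rcases List.mem_cons.1 hu with h|h
      · exact h ▸ iht
      · exact ihts u h


theorem foldr_attach_flat {α : Type} (g : Tm → List α) (ts : List Tm) :
    ts.attach.foldr (fun t l => g t.1 ++ l) [] = ts.flatMap g := by
  induction ts with
  | nil => simp
  | cons t ts ih => simp [List.attach_cons, List.foldr_map, ih]

theorem Tm.eval_fn {D : Type} (I : Interp D) (v : ℕ → D) (f : FSym) (ts : List Tm) :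
    Tm.eval I v (.fn f ts) = I.fns f (ts.map (Tm.eval I v)) := by
  rw [Tm.eval]; congr 1; simp [List.map_attach_eq_pmap]

theorem Tm.varsT_fn (f : FSym) (ts : List Tm) :
    Tm.varsT (.fn f ts) = ts.flatMap Tm.varsT := by
  rw [Tm.varsT]; exact foldr_attach_flat _ _

theorem Tm.substT_fn (x : ℕ) (u : Tm) (f : FSym) (ts : List Tm) :
    Tm.substT x u (.fn f ts) = .fn f (ts.map (Tm.substT x u)) := by
  rw [Tm.substT]; congr 1; simp [List.map_attach_eq_pmap]

theorem Tm.symsT_fn (f : FSym) (ts : List Tm) :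
    Tm.symsT (.fn f ts) = (f, ts.length) :: ts.flatMap Tm.symsT := by
  rw [Tm.symsT]; congr 1; exact foldr_attach_flat _ _

theorem Tm.eval_congr_v {D : Type} (I : Interp D) {v w : ℕ → D} (t : Tm)
    (h : ∀ z ∈ t.varsT, v z = w z) : t.eval I v = t.eval I w := by
  induction t using Tm.ind' with
  | hv x => simpa [Tm.eval, Tm.varsT] using h x (by simp [Tm.varsT])
  | hf f ts ih =>
      rw [Tm.eval_fn, Tm.eval_fn]
      congr 1
      apply List.map_congr_left
      intro t ht
      exact ih t ht (fun z hz => h z (by rw [Tm.varsT_fn]; exact List.mem_flatMap.2 ⟨t, ht, hz⟩))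

theorem Tm.eval_congr_I {D : Type} {I J : Interp D} (v : ℕ → D) (t : Tm)
    (h : ∀ p ∈ t.symsT, I.fns p.1 = J.fns p.1) : t.eval I v = t.eval J v := by
  induction t using Tm.ind' with
  | hv x => simp [Tm.eval]
  | hf f ts ih =>
      rw [Tm.eval_fn, Tm.eval_fn]
      rw [h (f, ts.length) (by rw [Tm.symsT_fn]; exact List.mem_cons_self)]
      congr 1
      apply List.map_congr_left
      intro t ht
      exact ih t ht (fun p hp => h p (by rw [Tm.symsT_fn]; exact List.mem_cons_of_mem _ (List.mem_flatMap.2 ⟨t, ht, hp⟩)))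

theorem Tm.eval_substT {D : Type} (I : Interp D) (v : ℕ → D) (x : ℕ) (u : Tm) (t : Tm) :
    (Tm.substT x u t).eval I v = t.eval I (Function.update v x (u.eval I v)) := by
  induction t using Tm.ind' with
  | hv y =>
      by_cases hy : y = x <;> simp [Tm.substT, Tm.eval, hy, Function.update]
  | hf f ts ih =>
      rw [Tm.substT_fn, Tm.eval_fn, Tm.eval_fn, List.map_map]
      congr 1
      apply List.map_congr_left
      intro t ht
      exact ih t ht

theorem Tm.symsT_substT (x : ℕ) (u : Tm) (t : Tm) :
    ∀ p ∈ (Tm.substT x u t).symsT, p ∈ t.symsT ∨ p ∈ u.symsT := by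
  induction t using Tm.ind' with
  | hv y => by_cases hy : y = x <;> simp [Tm.substT, hy, Tm.symsT]
  | hf f ts ih =>
      intro p hp
      rw [Tm.substT_fn, Tm.symsT_fn] at hp
      rcases List.mem_cons.1 hp with h | h
      · subst h; left; rw [Tm.symsT_fn]; simp
      · rcases List.mem_flatMap.1 h with ⟨t', ht', hp'⟩
        rcases List.mem_map.1 ht' with ⟨t, ht, rfl⟩
        rcases ih t ht p hp' with h' | h'
        · left; rw [Tm.symsT_fn]; exact List.mem_cons_of_mem _ (List.mem_flatMap.2 ⟨t, ht, h'⟩)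
        · right; exact h'

theorem Tm.varsT_substT (x : ℕ) (u : Tm) (t : Tm) :
    ∀ z ∈ (Tm.substT x u t).varsT, z ∈ t.varsT ∨ z ∈ u.varsT := by
  induction t using Tm.ind' with
  | hv y => by_cases hy : y = x <;> simp [Tm.substT, hy, Tm.varsT] <;> tauto
  | hf f ts ih =>
      intro z hz
      rw [Tm.substT_fn, Tm.varsT_fn] at hz
      rcases List.mem_flatMap.1 hz with ⟨t', ht', hz'⟩
      rcases List.mem_map.1 ht' with ⟨t, ht, rfl⟩
      rcases ih t ht z hz' with h' | h'
      · left; rw [Tm.varsT_fn]; exact List.mem_flatMap.2 ⟨t, ht, h'⟩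
      · right; exact h'


theorem Fm.holds_congr_v {D : Type} (I : Interp D) (A : Fm) :
    ∀ {v w : ℕ → D}, (∀ z ∈ A.freeVars, v z = w z) → (A.holds I v ↔ A.holds I w) := by
  induction A with
  | atom p ts =>
      intro v w h
      simp only [Fm.holds]
      have : ts.map (Tm.eval I v) = ts.map (Tm.eval I w) := by
        apply List.map_congr_left
        intro t ht
        exact Tm.eval_congr_v I t fun z hz => h z (by simp only [Fm.freeVars]; exact List.mem_flatMap.2 ⟨t, ht, hz⟩)
      rw [this]
  | neg A ih => intro v w h; simp only [Fm.holds]; rw [ih h]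
  | or A B ihA ihB =>
      intro v w h
      simp only [Fm.holds]
      rw [ihA fun z hz => h z (by simp [Fm.freeVars]; tauto),
          ihB fun z hz => h z (by simp [Fm.freeVars]; tauto)]
  | and A B ihA ihB =>
      intro v w h
      simp only [Fm.holds]
      rw [ihA fun z hz => h z (by simp [Fm.freeVars]; tauto),
          ihB fun z hz => h z (by simp [Fm.freeVars]; tauto)]
  | all x A ih =>
      intro v w h
      simp only [Fm.holds]
      apply forall_congr'
      intro d
      apply ih
      intro z hz
      by_cases hzx : z = x
      · simp [hzx, Function.update]
      · have : z ∈ (Fm.all x A).freeVars := by simp [Fm.freeVars, List.mem_filter, hz, hzx]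
        simp [Function.update, hzx, h z this]
  | ex x A ih =>
      intro v w h
      simp only [Fm.holds]
      apply exists_congr
      intro d
      apply ih
      intro z hz
      by_cases hzx : z = x
      · simp [hzx, Function.update]
      · have : z ∈ (Fm.ex x A).freeVars := by simp [Fm.freeVars, List.mem_filter, hz, hzx]
        simp [Function.update, hzx, h z this]

theorem Fm.holds_congr_I {D : Type} {I J : Interp D} (hprd : I.prd = J.prd) (A : Fm) :
    ∀ (v : ℕ → D), (∀ p ∈ A.symsF, I.fns p.1 = J.fns p.1) → (A.holds I v ↔ A.holds J v) := by
  induction A with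
  | atom p ts =>
      intro v h
      simp only [Fm.holds]
      have : ts.map (Tm.eval I v) = ts.map (Tm.eval J v) := by
        apply List.map_congr_left
        intro t ht
        exact Tm.eval_congr_I v t fun q hq => h q (by simp only [Fm.symsF]; exact List.mem_flatMap.2 ⟨t, ht, hq⟩)
      rw [this, hprd]
  | neg A ih => intro v h; simp only [Fm.holds]; rw [ih v h]
  | or A B ihA ihB =>
      intro v h
      simp only [Fm.holds]
      rw [ihA v fun q hq => h q (by simp [Fm.symsF]; tauto),
          ihB v fun q hq => h q (by simp [Fm.symsF]; tauto)]
  | and A B ihA ihB =>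
      intro v h
      simp only [Fm.holds]
      rw [ihA v fun q hq => h q (by simp [Fm.symsF]; tauto),
          ihB v fun q hq => h q (by simp [Fm.symsF]; tauto)]
  | all x A ih =>
      intro v h
      simp only [Fm.holds]
      exact forall_congr' fun d => ih _ fun q hq => h q (by simpa [Fm.symsF] using hq)
  | ex x A ih =>
      intro v h
      simp only [Fm.holds]
      exact exists_congr fun d => ih _ fun q hq => h q (by simpa [Fm.symsF] using hq)

theorem Fm.boundVars_subst (x : ℕ) (u : Tm) (A : Fm) :
    (Fm.subst x u A).boundVars = A.boundVars := by
  induction A with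
  | atom p ts => simp [Fm.subst, Fm.boundVars]
  | neg A ih => simp [Fm.subst, Fm.boundVars, ih]
  | or A B ihA ihB => simp [Fm.subst, Fm.boundVars, ihA, ihB]
  | and A B ihA ihB => simp [Fm.subst, Fm.boundVars, ihA, ihB]
  | all y A ih => by_cases hy : y = x <;> simp [Fm.subst, hy, Fm.boundVars, ih]
  | ex y A ih => by_cases hy : y = x <;> simp [Fm.subst, hy, Fm.boundVars, ih]

theorem Fm.symsF_subst (x : ℕ) (u : Tm) (A : Fm) :
    ∀ p ∈ (Fm.subst x u A).symsF, p ∈ A.symsF ∨ p ∈ u.symsT := by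
  induction A with
  | atom q ts =>
      intro p hp
      simp only [Fm.subst, Fm.symsF] at hp ⊢
      rcases List.mem_flatMap.1 hp with ⟨t', ht', hp'⟩
      rcases List.mem_map.1 ht' with ⟨t, ht, rfl⟩
      rcases Tm.symsT_substT x u t p hp' with h | h
      · exact Or.inl (List.mem_flatMap.2 ⟨t, ht, h⟩)
      · exact Or.inr h
  | neg A ih => exact ih
  | or A B ihA ihB =>
      intro p hp
      simp only [Fm.subst, Fm.symsF, List.mem_append] at hp ⊢
      rcases hp with hp | hp
      · rcases ihA p hp with h | h <;> tauto
      · rcases ihB p hp with h | h <;> tauto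
  | and A B ihA ihB =>
      intro p hp
      simp only [Fm.subst, Fm.symsF, List.mem_append] at hp ⊢
      rcases hp with hp | hp
      · rcases ihA p hp with h | h <;> tauto
      · rcases ihB p hp with h | h <;> tauto
  | all y A ih =>
      intro p hp
      by_cases hy : y = x <;> simp only [Fm.subst, hy, if_pos, if_neg, Fm.symsF] at hp <;>
        simp only [Fm.symsF]
      · exact Or.inl hp
      · exact ih p hp
  | ex y A ih =>
      intro p hp
      by_cases hy : y = x <;> simp only [Fm.subst, hy, if_pos, if_neg, Fm.symsF] at hp <;>
        simp only [Fm.symsF]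
      · exact Or.inl hp
      · exact ih p hp

theorem Fm.holds_subst {D : Type} (I : Interp D) (x : ℕ) (u : Tm) (A : Fm) :
    ∀ (v : ℕ → D), (∀ z ∈ u.varsT, z ∉ A.boundVars) →
      ((Fm.subst x u A).holds I v ↔ A.holds I (Function.update v x (u.eval I v))) := by
  induction A with
  | atom p ts =>
      intro v h
      simp only [Fm.subst, Fm.holds, List.map_map]
      have : ts.map (Tm.eval I v ∘ Tm.substT x u)
          = ts.map (Tm.eval I (Function.update v x (u.eval I v))) := by
        apply List.map_congr_left
        intro t ht
        exact Tm.eval_substT I v x u t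
      rw [this]
  | neg A ih => intro v h; simp only [Fm.subst, Fm.holds]; rw [ih v h]
  | or A B ihA ihB =>
      intro v h
      simp only [Fm.subst, Fm.holds]
      rw [ihA v fun z hz hb => h z hz (by simp [Fm.boundVars]; tauto),
          ihB v fun z hz hb => h z hz (by simp [Fm.boundVars]; tauto)]
  | and A B ihA ihB =>
      intro v h
      simp only [Fm.subst, Fm.holds]
      rw [ihA v fun z hz hb => h z hz (by simp [Fm.boundVars]; tauto),
          ihB v fun z hz hb => h z hz (by simp [Fm.boundVars]; tauto)]
  | all y A ih =>
      intro v h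
      by_cases hy : y = x
      · subst hy
        simp only [Fm.subst, if_pos rfl, Fm.holds]
        apply forall_congr'
        intro d
        rw [Function.update_idem]
      · simp only [Fm.subst, if_neg hy, Fm.holds]
        apply forall_congr'
        intro d
        rw [ih _ fun z hz hb => h z hz (by simp [Fm.boundVars]; tauto)]
        have hyu : y ∉ u.varsT := fun hyu => h y hyu (by simp [Fm.boundVars])
        have : u.eval I (Function.update v y d) = u.eval I v := by
          apply Tm.eval_congr_v
          intro z hz
          have : z ≠ y := fun e => hyu (e ▸ hz)
          simp [Function.update, this]
        rw [this, Function.update_comm (fun e => hy e.symm)]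
  | ex y A ih =>
      intro v h
      by_cases hy : y = x
      · subst hy
        simp only [Fm.subst, if_pos rfl, Fm.holds]
        apply exists_congr
        intro d
        rw [Function.update_idem]
      · simp only [Fm.subst, if_neg hy, Fm.holds]
        apply exists_congr
        intro d
        rw [ih _ fun z hz hb => h z hz (by simp [Fm.boundVars]; tauto)]
        have hyu : y ∉ u.varsT := fun hyu => h y hyu (by simp [Fm.boundVars])
        have : u.eval I (Function.update v y d) = u.eval I v := by
          apply Tm.eval_congr_v
          intro z hz
          have : z ≠ y := fun e => hyu (e ▸ hz)
          simp [Function.update, this]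
        rw [this, Function.update_comm (fun e => hy e.symm)]


theorem skTm_varsT (x : ℕ) (γs : List ℕ) : (skTm x γs).varsT = γs := by
  rw [skTm, Tm.varsT_fn]
  induction γs with
  | nil => simp
  | cons y γs ih => simp [Tm.varsT, ih]

theorem skTm_symsT (x : ℕ) (γs : List ℕ) :
    (skTm x γs).symsT = [(some (Sum.inr x), γs.length)] := by
  rw [skTm, Tm.symsT_fn]
  simp
  induction γs with
  | nil => simp
  | cons y γs ih => simp [Tm.symsT, ih]

theorem skTm_eval {D : Type} (I : Interp D) (v : ℕ → D) (x : ℕ) (γs : List ℕ) :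
    (skTm x γs).eval I v = I.fns (some (Sum.inr x)) (γs.map v) := by
  rw [skTm, Tm.eval_fn, List.map_map]
  congr 1
  apply List.map_congr_left
  intro y _
  simp [Tm.eval]

theorem Fm.boundVars_skolemize (A : Fm) :
    ∀ b γs, ∀ z ∈ (A.skolemize b γs).boundVars, z ∈ A.boundVars := by
  induction A with
  | atom p ts => intro b γs z hz; simpa [Fm.skolemize] using hz
  | neg A ih => intro b γs z hz; exact ih _ _ z (by simpa [Fm.skolemize, Fm.boundVars] using hz)
  | or A B ihA ihB =>
      intro b γs z hz
      simp only [Fm.skolemize, Fm.boundVars, List.mem_append] at hz ⊢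
      rcases hz with h | h
      · exact Or.inl (ihA _ _ z h)
      · exact Or.inr (ihB _ _ z h)
  | and A B ihA ihB =>
      intro b γs z hz
      simp only [Fm.skolemize, Fm.boundVars, List.mem_append] at hz ⊢
      rcases hz with h | h
      · exact Or.inl (ihA _ _ z h)
      · exact Or.inr (ihB _ _ z h)
  | all x A ih =>
      intro b γs z hz
      simp only [Fm.skolemize] at hz
      simp only [Fm.boundVars, List.mem_cons]
      cases b with
      | true =>
          simp only [if_pos] at hz
          rw [Fm.boundVars_subst] at hz
          exact Or.inr (ih _ _ z hz)
      | false =>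
          simp only [Bool.false_eq_true, if_neg not_false, Fm.boundVars, List.mem_cons] at hz
          rcases hz with h | h
          · exact Or.inl h
          · exact Or.inr (ih _ _ z h)
  | ex x A ih =>
      intro b γs z hz
      simp only [Fm.skolemize] at hz
      simp only [Fm.boundVars, List.mem_cons]
      cases b with
      | true =>
          simp only [if_pos, Fm.boundVars, List.mem_cons] at hz
          rcases hz with h | h
          · exact Or.inl h
          · exact Or.inr (ih _ _ z h)
      | false =>
          simp only [Bool.false_eq_true, if_neg not_false] at hz
          rw [Fm.boundVars_subst] at hz
          exact Or.inr (ih _ _ z hz)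

theorem Fm.symsF_skolemize (A : Fm) :
    ∀ b γs, ∀ p ∈ (A.skolemize b γs).symsF,
      p ∈ A.symsF ∨ ∃ x ∈ A.boundVars, p.1 = some (Sum.inr x) := by
  induction A with
  | atom q ts => intro b γs p hp; exact Or.inl (by simpa [Fm.skolemize] using hp)
  | neg A ih =>
      intro b γs p hp
      simp only [Fm.skolemize, Fm.symsF, Fm.boundVars] at hp ⊢
      exact ih _ _ p hp
  | or A B ihA ihB =>
      intro b γs p hp
      simp only [Fm.skolemize, Fm.symsF, List.mem_append, Fm.boundVars] at hp ⊢
      rcases hp with h | h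
      · rcases ihA _ _ p h with h' | ⟨x, hx, he⟩
        · tauto
        · exact Or.inr ⟨x, Or.inl hx, he⟩
      · rcases ihB _ _ p h with h' | ⟨x, hx, he⟩
        · tauto
        · exact Or.inr ⟨x, Or.inr hx, he⟩
  | and A B ihA ihB =>
      intro b γs p hp
      simp only [Fm.skolemize, Fm.symsF, List.mem_append, Fm.boundVars] at hp ⊢
      rcases hp with h | h
      · rcases ihA _ _ p h with h' | ⟨x, hx, he⟩
        · tauto
        · exact Or.inr ⟨x, Or.inl hx, he⟩
      · rcases ihB _ _ p h with h' | ⟨x, hx, he⟩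
        · tauto
        · exact Or.inr ⟨x, Or.inr hx, he⟩
  | all x A ih =>
      intro b γs p hp
      simp only [Fm.skolemize] at hp
      simp only [Fm.symsF, Fm.boundVars, List.mem_cons]
      cases b with
      | true =>
          simp only [if_pos] at hp
          rcases Fm.symsF_subst _ _ _ p hp with h | h
          · rcases ih _ _ p h with h' | ⟨y, hy, he⟩
            · exact Or.inl h'
            · exact Or.inr ⟨y, Or.inr hy, he⟩
          · rw [skTm_symsT] at h
            simp at h
            exact Or.inr ⟨x, Or.inl rfl, by rw [h]⟩
      | false =>
          simp only [Bool.false_eq_true, if_neg not_false, Fm.symsF] at hp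
          rcases ih _ _ p hp with h' | ⟨y, hy, he⟩
          · exact Or.inl h'
          · exact Or.inr ⟨y, Or.inr hy, he⟩
  | ex x A ih =>
      intro b γs p hp
      simp only [Fm.skolemize] at hp
      simp only [Fm.symsF, Fm.boundVars, List.mem_cons]
      cases b with
      | true =>
          simp only [if_pos, Fm.symsF] at hp
          rcases ih _ _ p hp with h' | ⟨y, hy, he⟩
          · exact Or.inl h'
          · exact Or.inr ⟨y, Or.inr hy, he⟩
      | false =>
          simp only [Bool.false_eq_true, if_neg not_false] at hp
          rcases Fm.symsF_subst _ _ _ p hp with h | h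
          · rcases ih _ _ p h with h' | ⟨y, hy, he⟩
            · exact Or.inl h'
            · exact Or.inr ⟨y, Or.inr hy, he⟩
          · rw [skTm_symsT] at h
            simp at h
            exact Or.inr ⟨x, Or.inl rfl, by rw [h]⟩


def updList {D : Type} (v : ℕ → D) : List ℕ → List D → (ℕ → D)
  | [], _ => v
  | _ :: _, [] => v
  | x :: xs, d :: ds => updList (Function.update v x d) xs ds

theorem updList_not_mem {D : Type} (v : ℕ → D) (xs : List ℕ) (ds : List D) (z : ℕ)
    (h : z ∉ xs) : updList v xs ds z = v z := by
  induction xs generalizing v ds with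
  | nil => rfl
  | cons x xs ih =>
      cases ds with
      | nil => rfl
      | cons d ds =>
          rw [updList, ih _ _ (fun hz => h (List.mem_cons_of_mem _ hz))]
          have hzx : z ≠ x := fun e => h (by rw [e]; exact List.mem_cons_self)
          simp [Function.update, hzx]

theorem updList_update_comm {D : Type} (v : ℕ → D) (xs : List ℕ) (ds : List D)
    (x : ℕ) (d : D) (h : x ∉ xs) :
    updList (Function.update v x d) xs ds = Function.update (updList v xs ds) x d := by
  induction xs generalizing v ds with
  | nil => rfl
  | cons y xs ih =>
      cases ds with
      | nil => rfl
      | cons e ds =>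
          rw [updList, updList, Function.update_comm (fun (he : x = y) => h (by rw [he]; exact List.mem_cons_self)),
            ih _ _ (fun hz => h (List.mem_cons_of_mem _ hz))]

theorem updList_append {D : Type} (v : ℕ → D) (xs : List ℕ) (ds : List D)
    (x : ℕ) (d : D) (h : ds.length = xs.length) :
    updList v (xs ++ [x]) (ds ++ [d]) = Function.update (updList v xs ds) x d := by
  induction xs generalizing v ds with
  | nil =>
      cases ds with
      | nil => rfl
      | cons e ds => simp at h
  | cons y xs ih =>
      cases ds with
      | nil => simp at h
      | cons e ds =>
          simp only [List.cons_append, updList]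
          exact ih _ _ (by simpa using h)

theorem map_updList {D : Type} (v : ℕ → D) (xs : List ℕ) (ds : List D)
    (hnd : xs.Nodup) (h : ds.length = xs.length) :
    xs.map (updList v xs ds) = ds := by
  induction xs generalizing v ds with
  | nil => cases ds with | nil => rfl | cons e ds => simp at h
  | cons y xs ih =>
      cases ds with
      | nil => simp at h
      | cons e ds =>
          simp only [List.map_cons, updList]
          have hy : y ∉ xs := (List.nodup_cons.1 hnd).1
          rw [updList_not_mem _ _ _ _ hy]
          simp only [Function.update_self]
          rw [ih _ _ (List.nodup_cons.1 hnd).2 (by simpa using h)]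


theorem Fm.mono {D : Type} (I : Interp D) (A : Fm) :
    ∀ (b : Bool) (γs : List ℕ) (v : ℕ → D),
      A.boundVars.Nodup → (∀ z ∈ γs, z ∉ A.boundVars) →
      ((b = true → (A.holds I v → (A.skolemize b γs).holds I v)) ∧
       (b = false → ((A.skolemize b γs).holds I v → A.holds I v))) := by
  induction A with
  | atom p ts =>
      intro b γs v _ _
      constructor <;> intro _ h <;> simpa [Fm.skolemize, Fm.holds] using h
  | neg A ih =>
      intro b γs v hnd hγ
      simp only [Fm.boundVars] at hnd hγ
      constructor <;> intro hb h <;> simp only [Fm.skolemize, Fm.holds] at h ⊢ <;>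
        intro hc <;> apply h
      · exact ((ih (!b) γs v hnd hγ).2 (by simp [hb])) hc
      · exact ((ih (!b) γs v hnd hγ).1 (by simp [hb])) hc
  | or A B ihA ihB =>
      intro b γs v hnd hγ
      simp only [Fm.boundVars, List.nodup_append] at hnd
      have hγA : ∀ z ∈ γs, z ∉ A.boundVars := fun z hz hb =>
        hγ z hz (by simp [Fm.boundVars]; tauto)
      have hγB : ∀ z ∈ γs, z ∉ B.boundVars := fun z hz hb =>
        hγ z hz (by simp [Fm.boundVars]; tauto)
      constructor <;> intro hb h <;> simp only [Fm.skolemize, Fm.holds] at h ⊢ <;>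
        rcases h with h | h
      · exact Or.inl ((ihA b γs v hnd.1 hγA).1 hb h)
      · exact Or.inr ((ihB b γs v hnd.2.1 hγB).1 hb h)
      · exact Or.inl ((ihA b γs v hnd.1 hγA).2 hb h)
      · exact Or.inr ((ihB b γs v hnd.2.1 hγB).2 hb h)
  | and A B ihA ihB =>
      intro b γs v hnd hγ
      simp only [Fm.boundVars, List.nodup_append] at hnd
      have hγA : ∀ z ∈ γs, z ∉ A.boundVars := fun z hz hb =>
        hγ z hz (by simp [Fm.boundVars]; tauto)
      have hγB : ∀ z ∈ γs, z ∉ B.boundVars := fun z hz hb =>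
        hγ z hz (by simp [Fm.boundVars]; tauto)
      constructor <;> intro hb h <;> simp only [Fm.skolemize, Fm.holds] at h ⊢
      · exact ⟨(ihA b γs v hnd.1 hγA).1 hb h.1, (ihB b γs v hnd.2.1 hγB).1 hb h.2⟩
      · exact ⟨(ihA b γs v hnd.1 hγA).2 hb h.1, (ihB b γs v hnd.2.1 hγB).2 hb h.2⟩
  | all x A ih =>
      intro b γs v hnd hγ
      have hndA : A.boundVars.Nodup := (List.nodup_cons.1 hnd).2
      have hxA : x ∉ A.boundVars := (List.nodup_cons.1 hnd).1
      have hγA : ∀ z ∈ γs, z ∉ A.boundVars := fun z hz hb =>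
        hγ z hz (by simp [Fm.boundVars]; tauto)
      have hcap : ∀ z ∈ (skTm x γs).varsT, z ∉ (A.skolemize true γs).boundVars := by
        rw [skTm_varsT]
        intro z hz hb
        exact hγA z hz (A.boundVars_skolemize _ _ z hb)
      constructor <;> intro hb h
      · subst hb
        simp only [Fm.skolemize, if_pos]
        rw [Fm.holds_subst I x (skTm x γs) _ v hcap]
        exact (ih true γs _ hndA hγA).1 rfl (h ((skTm x γs).eval I v))
      · subst hb
        simp only [Fm.skolemize, Bool.false_eq_true, if_neg not_false, Fm.holds] at h
        intro d
        have hγA' : ∀ z ∈ γs ++ [x], z ∉ A.boundVars := by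
          intro z hz
          rcases List.mem_append.1 hz with h' | h'
          · exact hγA z h'
          · simp at h'; exact h' ▸ hxA
        exact (ih false (γs ++ [x]) _ hndA hγA').2 rfl (h d)
  | ex x A ih =>
      intro b γs v hnd hγ
      have hndA : A.boundVars.Nodup := (List.nodup_cons.1 hnd).2
      have hxA : x ∉ A.boundVars := (List.nodup_cons.1 hnd).1
      have hγA : ∀ z ∈ γs, z ∉ A.boundVars := fun z hz hb =>
        hγ z hz (by simp [Fm.boundVars]; tauto)
      have hcap : ∀ z ∈ (skTm x γs).varsT, z ∉ (A.skolemize false γs).boundVars := by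
        rw [skTm_varsT]
        intro z hz hb
        exact hγA z hz (A.boundVars_skolemize _ _ z hb)
      constructor <;> intro hb h
      · subst hb
        simp only [Fm.skolemize, if_pos, Fm.holds]
        rcases h with ⟨d, hd⟩
        have hγA' : ∀ z ∈ γs ++ [x], z ∉ A.boundVars := by
          intro z hz
          rcases List.mem_append.1 hz with h' | h'
          · exact hγA z h'
          · simp at h'; exact h' ▸ hxA
        exact ⟨d, (ih true (γs ++ [x]) _ hndA hγA').1 rfl hd⟩
      · subst hb
        simp only [Fm.skolemize, Bool.false_eq_true, if_neg not_false] at h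
        rw [Fm.holds_subst I x (skTm x γs) _ v hcap] at h
        exact ⟨_, (ih false γs _ hndA hγA).2 rfl h⟩

theorem Fm.holds_congr_fns {D : Type} (fa fb : FSym → List D → D) (prd : ℕ → List D → Prop)
    (A : Fm) (v : ℕ → D) (h : ∀ p ∈ A.symsF, fa p.1 = fb p.1) :
    (A.holds ⟨fa, prd⟩ v ↔ A.holds ⟨fb, prd⟩ v) :=
  Fm.holds_congr_I (I := ⟨fa, prd⟩) (J := ⟨fb, prd⟩) rfl A v h

def combineFns {D : Type} (xs : List ℕ) (f1 f2 : FSym → List D → D) : FSym → List D → D :=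
  fun f => if (xs.any fun x => decide (f = some (Sum.inr x))) then f1 f else f2 f

theorem combineFns_left {D : Type} {xs : List ℕ} {f1 f2 : FSym → List D → D} {f : FSym}
    (h : ∃ x ∈ xs, f = some (Sum.inr x)) : combineFns xs f1 f2 f = f1 f := by
  have : (xs.any fun x => decide (f = some (Sum.inr x))) = true := by
    rw [List.any_eq_true]
    obtain ⟨x, hx, he⟩ := h
    exact ⟨x, hx, decide_eq_true he⟩
  simp [combineFns, this]

theorem combineFns_right {D : Type} {xs : List ℕ} {f1 f2 : FSym → List D → D} {f : FSym}
    (h : ∀ x ∈ xs, f ≠ some (Sum.inr x)) : combineFns xs f1 f2 f = f2 f := by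
  have : ¬ (xs.any fun x => decide (f = some (Sum.inr x))) = true := by
    simp only [List.any_eq_true, decide_eq_true_eq]
    push_neg
    exact fun x hx => h x hx
  simp [combineFns, this]

def overrideFn {D : Type} (x : ℕ) (w : List D → D) (f1 : FSym → List D → D) :
    FSym → List D → D :=
  fun f => if f = some (Sum.inr x) then w else f1 f

theorem overrideFn_at {D : Type} (x : ℕ) (w : List D → D) (f1 : FSym → List D → D) :
    overrideFn x w f1 (some (Sum.inr x)) = w := by simp [overrideFn]

theorem overrideFn_ne {D : Type} {x : ℕ} {w : List D → D} {f1 : FSym → List D → D} {f : FSym}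
    (h : f ≠ some (Sum.inr x)) : overrideFn x w f1 f = f1 f := by simp [overrideFn, h]


theorem Fm.falsify {D : Type} [Nonempty D] (I : Interp D) (A : Fm) :
    ∀ (b : Bool) (γs : List ℕ) (V : List D → ℕ → D),
      A.boundVars.Nodup → (∀ z ∈ γs, z ∉ A.boundVars) → γs.Nodup → A.isBase →
      ∃ fns' : FSym → List D → D,
        (∀ f : FSym, (∀ x ∈ A.boundVars, f ≠ some (Sum.inr x)) → fns' f = I.fns f) ∧
        ∀ ds : List D, ds.length = γs.length →
          (b = true → ((A.skolemize b γs).holds ⟨fns', I.prd⟩ (updList (V ds) γs ds) →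
              A.holds I (updList (V ds) γs ds))) ∧
          (b = false → (A.holds I (updList (V ds) γs ds) →
              (A.skolemize b γs).holds ⟨fns', I.prd⟩ (updList (V ds) γs ds))) := by
  induction A with
  | atom p ts =>
      intro b γs V _ _ _ _
      refine ⟨I.fns, fun f _ => rfl, fun ds _ => ?_⟩
      constructor <;> intro _ h <;> simpa [Fm.skolemize, Fm.holds] using h
  | neg A ih =>
      intro b γs V hnd hγ hndγ hbase
      simp only [Fm.boundVars] at hnd hγ
      obtain ⟨f1, hf1, h1⟩ := ih (!b) γs V hnd hγ hndγ hbase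
      refine ⟨f1, hf1, fun ds hlen => ?_⟩
      constructor <;> intro hb h <;> simp only [Fm.skolemize, Fm.holds] at h ⊢ <;>
        intro hc <;> apply h
      · exact ((h1 ds hlen).2 (by simp [hb])) hc
      · exact ((h1 ds hlen).1 (by simp [hb])) hc
  | or A B ihA ihB =>
      intro b γs V hnd hγ hndγ hbase
      simp only [Fm.boundVars, List.nodup_append] at hnd
      have hγA : ∀ z ∈ γs, z ∉ A.boundVars := fun z hz hb =>
        hγ z hz (by simp [Fm.boundVars]; tauto)
      have hγB : ∀ z ∈ γs, z ∉ B.boundVars := fun z hz hb =>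
        hγ z hz (by simp [Fm.boundVars]; tauto)
      have hbA : A.isBase := fun p hp => hbase p (by simp only [Fm.symsF, List.mem_append]; tauto)
      have hbB : B.isBase := fun p hp => hbase p (by simp only [Fm.symsF, List.mem_append]; tauto)
      obtain ⟨f1, hf1, h1⟩ := ihA b γs V hnd.1 hγA hndγ hbA
      obtain ⟨f2, hf2, h2⟩ := ihB b γs V hnd.2.1 hγB hndγ hbB
      refine ⟨combineFns A.boundVars f1 f2, ?_, fun ds hlen => ?_⟩
      · intro f hf
        rw [combineFns_right fun x hx => hf x (by simp [Fm.boundVars]; tauto)]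
        exact hf2 f fun x hx => hf x (by simp [Fm.boundVars]; tauto)
      · have congr1 : ∀ v : ℕ → D,
            (A.skolemize b γs).holds ⟨combineFns A.boundVars f1 f2, I.prd⟩ v
            ↔ (A.skolemize b γs).holds ⟨f1, I.prd⟩ v := by
          intro v
          apply Fm.holds_congr_fns
          intro p hp
          rcases A.symsF_skolemize b γs p hp with h | ⟨x, hx, he⟩
          · obtain ⟨k, hk⟩ := hbA p h
            rw [combineFns_right (fun x _ => by simp [hk]),
                hf2 p.1 (fun x _ => by simp [hk]), hf1 p.1 (fun x _ => by simp [hk])]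
          · rw [combineFns_left ⟨x, hx, he⟩]
        have congr2 : ∀ v : ℕ → D,
            (B.skolemize b γs).holds ⟨combineFns A.boundVars f1 f2, I.prd⟩ v
            ↔ (B.skolemize b γs).holds ⟨f2, I.prd⟩ v := by
          intro v
          apply Fm.holds_congr_fns
          intro p hp
          rcases B.symsF_skolemize b γs p hp with h | ⟨x, hx, he⟩
          · obtain ⟨k, hk⟩ := hbB p h
            rw [combineFns_right (fun x _ => by simp [hk])]
          · rw [combineFns_right]
            intro y hy hee
            have hxy : x = y := by
              have := he ▸ hee
              simpa using this
            exact hnd.2.2 y hy x hx hxy.symm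
        constructor <;> intro hb h <;> simp only [Fm.skolemize, Fm.holds] at h ⊢ <;>
          rcases h with h | h
        · exact Or.inl ((h1 ds hlen).1 hb ((congr1 _).1 h))
        · exact Or.inr ((h2 ds hlen).1 hb ((congr2 _).1 h))
        · exact Or.inl ((congr1 _).2 ((h1 ds hlen).2 hb h))
        · exact Or.inr ((congr2 _).2 ((h2 ds hlen).2 hb h))
  | and A B ihA ihB =>
      intro b γs V hnd hγ hndγ hbase
      simp only [Fm.boundVars, List.nodup_append] at hnd
      have hγA : ∀ z ∈ γs, z ∉ A.boundVars := fun z hz hb =>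
        hγ z hz (by simp [Fm.boundVars]; tauto)
      have hγB : ∀ z ∈ γs, z ∉ B.boundVars := fun z hz hb =>
        hγ z hz (by simp [Fm.boundVars]; tauto)
      have hbA : A.isBase := fun p hp => hbase p (by simp only [Fm.symsF, List.mem_append]; tauto)
      have hbB : B.isBase := fun p hp => hbase p (by simp only [Fm.symsF, List.mem_append]; tauto)
      obtain ⟨f1, hf1, h1⟩ := ihA b γs V hnd.1 hγA hndγ hbA
      obtain ⟨f2, hf2, h2⟩ := ihB b γs V hnd.2.1 hγB hndγ hbB
      refine ⟨combineFns A.boundVars f1 f2, ?_, fun ds hlen => ?_⟩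
      · intro f hf
        rw [combineFns_right fun x hx => hf x (by simp [Fm.boundVars]; tauto)]
        exact hf2 f fun x hx => hf x (by simp [Fm.boundVars]; tauto)
      · have congr1 : ∀ v : ℕ → D,
            (A.skolemize b γs).holds ⟨combineFns A.boundVars f1 f2, I.prd⟩ v
            ↔ (A.skolemize b γs).holds ⟨f1, I.prd⟩ v := by
          intro v
          apply Fm.holds_congr_fns
          intro p hp
          rcases A.symsF_skolemize b γs p hp with h | ⟨x, hx, he⟩
          · obtain ⟨k, hk⟩ := hbA p h
            rw [combineFns_right (fun x _ => by simp [hk]),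
                hf2 p.1 (fun x _ => by simp [hk]), hf1 p.1 (fun x _ => by simp [hk])]
          · rw [combineFns_left ⟨x, hx, he⟩]
        have congr2 : ∀ v : ℕ → D,
            (B.skolemize b γs).holds ⟨combineFns A.boundVars f1 f2, I.prd⟩ v
            ↔ (B.skolemize b γs).holds ⟨f2, I.prd⟩ v := by
          intro v
          apply Fm.holds_congr_fns
          intro p hp
          rcases B.symsF_skolemize b γs p hp with h | ⟨x, hx, he⟩
          · obtain ⟨k, hk⟩ := hbB p h
            rw [combineFns_right (fun x _ => by simp [hk])]
          · rw [combineFns_right]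
            intro y hy hee
            have hxy : x = y := by
              have := he ▸ hee
              simpa using this
            exact hnd.2.2 y hy x hx hxy.symm
        constructor <;> intro hb h <;> simp only [Fm.skolemize, Fm.holds] at h ⊢
        · exact ⟨(h1 ds hlen).1 hb ((congr1 _).1 h.1), (h2 ds hlen).1 hb ((congr2 _).1 h.2)⟩
        · exact ⟨(congr1 _).2 ((h1 ds hlen).2 hb h.1), (congr2 _).2 ((h2 ds hlen).2 hb h.2)⟩
  | all x A ih =>
      intro b γs V hnd hγ hndγ hbase
      have hndA : A.boundVars.Nodup := (List.nodup_cons.1 hnd).2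
      have hxA : x ∉ A.boundVars := (List.nodup_cons.1 hnd).1
      have hγA : ∀ z ∈ γs, z ∉ A.boundVars := fun z hz hb =>
        hγ z hz (by simp [Fm.boundVars]; tauto)
      have hxγ : x ∉ γs := fun hx => hγ x hx (by simp [Fm.boundVars])
      have hbA : A.isBase := fun p hp => hbase p hp
      cases b with
      | false =>
          have hγA' : ∀ z ∈ γs ++ [x], z ∉ A.boundVars := by
            intro z hz
            rcases List.mem_append.1 hz with h' | h'
            · exact hγA z h'
            · simp at h'; exact h' ▸ hxA
          have hndγ' : (γs ++ [x]).Nodup := by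
            simp [List.nodup_append, hndγ, List.disjoint_singleton, hxγ]
            rintro a ha rfl; exact hxγ ha
          obtain ⟨f1, hf1, h1⟩ := ih false (γs ++ [x])
            (fun ds' => V (ds'.take γs.length)) hndA hγA' hndγ' hbA
          refine ⟨f1, ?_, fun ds hlen => ?_⟩
          · intro f hf
            exact hf1 f fun y hy => hf y (by simp [Fm.boundVars]; tauto)
          · constructor
            · intro hb; exact absurd hb (by simp)
            · intro _ h
              simp only [Fm.skolemize, Bool.false_eq_true, if_neg not_false, Fm.holds] at h ⊢
              intro d
              have key := (h1 (ds ++ [d]) (by simp [hlen])).2 rfl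
              rw [List.take_left' hlen] at key
              rw [updList_append _ _ _ _ _ hlen] at key
              exact key (h d)
      | true =>
          have w : List D → D := fun ds =>
            Classical.epsilon (fun d => ¬ A.holds I (Function.update (updList (V ds) γs ds) x d))
          set w : List D → D := fun ds =>
            Classical.epsilon (fun d => ¬ A.holds I (Function.update (updList (V ds) γs ds) x d))
            with hw
          obtain ⟨f1, hf1, h1⟩ := ih true γs
            (fun ds => Function.update (V ds) x (w ds)) hndA hγA hndγ hbA
          refine ⟨overrideFn x w f1, ?_, fun ds hlen => ?_⟩
          · intro f hf
            rw [overrideFn_ne (hf x (by simp [Fm.boundVars]))]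
            exact hf1 f fun y hy => hf y (by simp [Fm.boundVars]; tauto)
          · constructor
            · intro _ h
              simp only [Fm.skolemize, if_pos] at h
              have hcap : ∀ z ∈ (skTm x γs).varsT, z ∉ (A.skolemize true γs).boundVars := by
                rw [skTm_varsT]
                intro z hz hb
                exact hγA z hz (A.boundVars_skolemize _ _ z hb)
              rw [Fm.holds_subst _ x (skTm x γs) _ _ hcap] at h
              rw [skTm_eval] at h
              have heval : (Interp.mk (overrideFn x w f1) I.prd).fns (some (Sum.inr x))
                  ((γs.map (updList (V ds) γs ds))) = w ds := by
                show overrideFn x w f1 (some (Sum.inr x)) _ = w ds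
                rw [overrideFn_at, map_updList _ _ _ hndγ hlen]
              rw [heval] at h
              have congr1 : (A.skolemize true γs).holds
                  ⟨overrideFn x w f1, I.prd⟩
                  (Function.update (updList (V ds) γs ds) x (w ds))
                  ↔ (A.skolemize true γs).holds ⟨f1, I.prd⟩
                  (Function.update (updList (V ds) γs ds) x (w ds)) := by
                apply Fm.holds_congr_fns
                intro p hp
                rcases A.symsF_skolemize true γs p hp with h' | ⟨y, hy, he⟩
                · obtain ⟨k, hk⟩ := hbA p h'
                  rw [overrideFn_ne (by simp [hk])]
                · rw [overrideFn_ne (by rw [he]; simp; exact fun e => hxA (e ▸ hy))]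
              rw [congr1] at h
              have key := (h1 ds hlen).1 rfl
              rw [updList_update_comm _ _ _ _ _ hxγ] at key
              have hA := key h
              simp only [Fm.holds]
              intro d
              by_contra hd
              have hex : ∃ d, ¬ A.holds I (Function.update (updList (V ds) γs ds) x d) := ⟨d, hd⟩
              exact (Classical.epsilon_spec
                (p := fun d => ¬ A.holds I (Function.update (updList (V ds) γs ds) x d)) hex) hA
            · intro hb; exact absurd hb (by simp)
  | ex x A ih =>
      intro b γs V hnd hγ hndγ hbase
      have hndA : A.boundVars.Nodup := (List.nodup_cons.1 hnd).2
      have hxA : x ∉ A.boundVars := (List.nodup_cons.1 hnd).1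
      have hγA : ∀ z ∈ γs, z ∉ A.boundVars := fun z hz hb =>
        hγ z hz (by simp [Fm.boundVars]; tauto)
      have hxγ : x ∉ γs := fun hx => hγ x hx (by simp [Fm.boundVars])
      have hbA : A.isBase := fun p hp => hbase p hp
      cases b with
      | true =>
          have hγA' : ∀ z ∈ γs ++ [x], z ∉ A.boundVars := by
            intro z hz
            rcases List.mem_append.1 hz with h' | h'
            · exact hγA z h'
            · simp at h'; exact h' ▸ hxA
          have hndγ' : (γs ++ [x]).Nodup := by
            simp [List.nodup_append, hndγ, List.disjoint_singleton, hxγ]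
            rintro a ha rfl; exact hxγ ha
          obtain ⟨f1, hf1, h1⟩ := ih true (γs ++ [x])
            (fun ds' => V (ds'.take γs.length)) hndA hγA' hndγ' hbA
          refine ⟨f1, ?_, fun ds hlen => ?_⟩
          · intro f hf
            exact hf1 f fun y hy => hf y (by simp [Fm.boundVars]; tauto)
          · constructor
            · intro _ h
              simp only [Fm.skolemize, if_pos, Fm.holds] at h ⊢
              obtain ⟨d, hd⟩ := h
              have key := (h1 (ds ++ [d]) (by simp [hlen])).1 rfl
              rw [List.take_left' hlen] at key
              rw [updList_append _ _ _ _ _ hlen] at key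
              exact ⟨d, key hd⟩
            · intro hb; exact absurd hb (by simp)
      | false =>
          set w : List D → D := fun ds =>
            Classical.epsilon (fun d => A.holds I (Function.update (updList (V ds) γs ds) x d))
            with hw
          obtain ⟨f1, hf1, h1⟩ := ih false γs
            (fun ds => Function.update (V ds) x (w ds)) hndA hγA hndγ hbA
          refine ⟨overrideFn x w f1, ?_, fun ds hlen => ?_⟩
          · intro f hf
            rw [overrideFn_ne (hf x (by simp [Fm.boundVars]))]
            exact hf1 f fun y hy => hf y (by simp [Fm.boundVars]; tauto)
          · constructor
            · intro hb; exact absurd hb (by simp)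
            · intro _ h
              simp only [Fm.holds] at h
              simp only [Fm.skolemize, Bool.false_eq_true, if_neg not_false]
              have hcap : ∀ z ∈ (skTm x γs).varsT, z ∉ (A.skolemize false γs).boundVars := by
                rw [skTm_varsT]
                intro z hz hb
                exact hγA z hz (A.boundVars_skolemize _ _ z hb)
              rw [Fm.holds_subst _ x (skTm x γs) _ _ hcap]
              rw [skTm_eval]
              have heval : (Interp.mk (overrideFn x w f1) I.prd).fns (some (Sum.inr x))
                  ((γs.map (updList (V ds) γs ds))) = w ds := by
                show overrideFn x w f1 (some (Sum.inr x)) _ = w ds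
                rw [overrideFn_at, map_updList _ _ _ hndγ hlen]
              rw [heval]
              have hA : A.holds I (Function.update (updList (V ds) γs ds) x (w ds)) :=
                Classical.epsilon_spec
                  (p := fun d => A.holds I (Function.update (updList (V ds) γs ds) x d)) h
              have key := (h1 ds hlen).2 rfl
              rw [updList_update_comm _ _ _ _ _ hxγ] at key
              have hF := key hA
              have congr1 : (A.skolemize false γs).holds
                  ⟨overrideFn x w f1, I.prd⟩
                  (Function.update (updList (V ds) γs ds) x (w ds))
                  ↔ (A.skolemize false γs).holds ⟨f1, I.prd⟩
                  (Function.update (updList (V ds) γs ds) x (w ds)) := by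
                apply Fm.holds_congr_fns
                intro p hp
                rcases A.symsF_skolemize false γs p hp with h' | ⟨y, hy, he⟩
                · obtain ⟨k, hk⟩ := hbA p h'
                  rw [overrideFn_ne (by simp [hk])]
                · rw [overrideFn_ne (by rw [he]; simp; exact fun e => hxA (e ▸ hy))]
              exact congr1.2 hF


/-- **Outer Skolemization preserves validity.** `A` is valid iff its outer
Skolemized form is valid, where validity of the latter is taken over all
structures interpreting the language extended by the Skolem symbols. -/
theorem outer_skolemization_preserves_validity (A : Fm)
    (hrect : A.rectified) (hbase : A.isBase) :
    A.valid ↔ A.outerSk.valid := by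
  constructor
  · intro hA D hne I v
    rw [Fm.outerSk]
    exact (Fm.mono I A true [] v hrect.1 (by simp)).1 rfl (hA D hne I v)
  · intro hF D hne I v
    haveI := hne
    obtain ⟨fns', hagree, hmain⟩ :=
      Fm.falsify I A true [] (fun _ => v) hrect.1 (by simp) (by simp) hbase
    have key := (hmain [] rfl).1 rfl
    have hf := hF D hne ⟨fns', I.prd⟩ v
    rw [Fm.outerSk] at hf
    exact key hf

end Herbrand
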